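/- Let d ≥ 1 and a₁,…,a_d ≥ 1 be integers. If A₀ ⊆ {1,…,a₁}×⋯×{1,…,a_d} percolates with respect to the d-neighbour bootstrap process in the grid [a₁]×⋯×[a_d], then |A₀| ≥ ⌈(e(A₀) + Σ_{j=1}^{d} ∏_{i≠j} a_i)/d⌉. In particular, m(a₁,…,a_d;d) ≥ ⌈(Σ_{j=1}^{d} ∏_{i≠j} a_i)/d⌉. -/

import Mathlib

/-!
Adding to `S` a vertex with at least `r` neighbours in `S` raises `|S|` by one and `e(S)` by at
least `r`, so the potential `r|S| - e(S)` never increases during the `r`-neighbour process. If `A₀`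
percolates in the grid for `r = d`, then `d|A₀| - e(A₀) ≥ d|V| - |E|`, and `d|V| - |E|` is at
least the surface area `∑ⱼ ∏_{i ≠ j} aᵢ`: in direction `j`, each edge has a lower endpoint off the
top face `uⱼ = aⱼ`, which has `∏_{i ≠ j} aᵢ` vertices.
-/

namespace BP

/-- The `r`-neighbour bootstrap closure of `A₀` in `G`: the smallest set `S` containing `A₀`
such that every vertex with at least `r` neighbours in `S` belongs to `S`. -/
def closure {V : Type*} (G : SimpleGraph V) (r : ℕ) (A₀ : Set V) : Set V :=
  ⋂₀ {S : Set V | A₀ ⊆ S ∧ ∀ v : V, r ≤ (G.neighborSet v ∩ S).ncard → v ∈ S}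

/-- `A₀` percolates under the `r`-neighbour bootstrap process in `G`. -/
def Percolates {V : Type*} (G : SimpleGraph V) (r : ℕ) (A₀ : Set V) : Prop :=
  closure G r A₀ = Set.univ

/-- The minimum cardinality of a set percolating under the `r`-neighbour process in `G`. -/
noncomputable def minPerc {V : Type*} (G : SimpleGraph V) (r : ℕ) : ℕ :=
  sInf {n : ℕ | ∃ A₀ : Set V, Percolates G r A₀ ∧ A₀.ncard = n}

/-- The `d`-dimensional grid graph `[a 0] × ⋯ × [a (d-1)]`. -/
def gridD (d : ℕ) (a : Fin d → ℕ) : SimpleGraph ((i : Fin d) → Fin (a i)) where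
  Adj u v := ∃ j : Fin d,
    ((u j : ℕ) + 1 = (v j : ℕ) ∨ (v j : ℕ) + 1 = (u j : ℕ)) ∧
      ∀ i : Fin d, i ≠ j → u i = v i
  symm := by
    constructor
    rintro u v ⟨j, hj, h⟩
    exact ⟨j, hj.symm, fun i hi => (h i hi).symm⟩
  loopless := by
    constructor
    rintro u ⟨j, hj, -⟩
    omega

/-- The number of edges of `G` having both endpoints in `A`. -/
noncomputable def eIn {V : Type*} (G : SimpleGraph V) (A : Set V) : ℕ :=
  {e ∈ G.edgeSet | ∀ v ∈ e, v ∈ A}.ncard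

section Closure

variable {V : Type*} (G : SimpleGraph V) (r : ℕ) (A₀ : Set V)

lemma subset_closure : A₀ ⊆ closure G r A₀ :=
  Set.subset_sInter fun _ hS => hS.1

lemma closure_subset {S : Set V} (hA : A₀ ⊆ S)
    (hS : ∀ v, r ≤ (G.neighborSet v ∩ S).ncard → v ∈ S) : closure G r A₀ ⊆ S :=
  Set.sInter_subset_of_mem ⟨hA, hS⟩

lemma mem_closure_of_le_ncard [Finite V] {v : V}
    (hv : r ≤ (G.neighborSet v ∩ closure G r A₀).ncard) : v ∈ closure G r A₀ :=
  Set.mem_sInter.2 fun _ hS => hS.2 v <| hv.trans <|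
    Set.ncard_le_ncard (Set.inter_subset_inter_right _ (Set.sInter_subset_of_mem hS))

lemma percolates_univ : Percolates G r Set.univ :=
  Set.univ_subset_iff.1 (subset_closure G r Set.univ)

lemma exists_percolates_ncard_eq_minPerc :
    ∃ B : Set V, Percolates G r B ∧ B.ncard = minPerc G r :=
  Nat.sInf_mem (s := {n | ∃ B : Set V, Percolates G r B ∧ B.ncard = n})
    ⟨_, Set.univ, percolates_univ G r, rfl⟩

end Closure

section Potential

variable {V : Type*} (G : SimpleGraph V)

lemma eIn_univ : eIn G Set.univ = G.edgeSet.ncard := by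
  simp [eIn]

lemma eIn_add_ncard_neighborSet_inter_le [Finite V] {S : Set V} {v : V} (hv : v ∉ S) :
    eIn G S + (G.neighborSet v ∩ S).ncard ≤ eIn G (insert v S) := by
  set inner : Set (Sym2 V) := {e ∈ G.edgeSet | ∀ w ∈ e, w ∈ S}
  set spokes : Set (Sym2 V) := (fun w => s(v, w)) '' (G.neighborSet v ∩ S)
  have hspokes : spokes.ncard = (G.neighborSet v ∩ S).ncard :=
    Set.ncard_image_of_injective _ fun _ _ h => Sym2.congr_right.1 h
  have hdisj : Disjoint inner spokes := by
    rw [Set.disjoint_left]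
    rintro e he ⟨w, -, rfl⟩
    exact hv (he.2 v (Sym2.mem_mk_left v w))
  have hsub : inner ∪ spokes ⊆ {e ∈ G.edgeSet | ∀ w ∈ e, w ∈ insert v S} := by
    rintro e (he | ⟨w, hw, rfl⟩)
    · exact ⟨he.1, fun u hu => Set.mem_insert_of_mem _ (he.2 u hu)⟩
    · refine ⟨G.mem_edgeSet.2 hw.1, fun u hu => ?_⟩
      rcases Sym2.mem_iff.1 hu with rfl | rfl
      exacts [Set.mem_insert _ _, Set.mem_insert_of_mem _ hw.2]
  calc eIn G S + (G.neighborSet v ∩ S).ncard = (inner ∪ spokes).ncard := by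
        rw [Set.ncard_union_eq hdisj, hspokes]; rfl
    _ ≤ eIn G (insert v S) := Set.ncard_le_ncard hsub

theorem mul_ncard_closure_add_eIn_le [Finite V] (r : ℕ) (A₀ : Set V) {S : Set V} (hA : A₀ ⊆ S)
    (hS : S ⊆ closure G r A₀) :
    r * (closure G r A₀).ncard + eIn G S ≤ r * S.ncard + eIn G (closure G r A₀) := by
  set C := closure G r A₀
  induction hn : (C \ S).ncard generalizing S with
  | zero =>
    rw [hS.antisymm (Set.sdiff_eq_empty.1 ((Set.ncard_eq_zero (Set.toFinite _)).1 hn))]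
  | succ n ih =>
    obtain ⟨v, hvr, hvS⟩ : ∃ v, r ≤ (G.neighborSet v ∩ S).ncard ∧ v ∉ S := by
      by_contra! hclosed
      rw [Set.sdiff_eq_empty.2 (closure_subset G r A₀ hA hclosed), Set.ncard_empty] at hn
      cases hn
    have hvC : v ∈ C := mem_closure_of_le_ncard G r A₀
      (hvr.trans (Set.ncard_le_ncard (Set.inter_subset_inter_right _ hS)))
    have hn' : (C \ insert v S).ncard = n := by
      rw [Set.insert_eq, Set.union_comm, ← Set.sdiff_sdiff,
        Set.ncard_sdiff_singleton_of_mem (Set.mem_sdiff_of_mem hvC hvS), hn]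
      rfl
    have hstep := eIn_add_ncard_neighborSet_inter_le G hvS
    have hind := ih (hA.trans (Set.subset_insert v S)) (Set.insert_subset hvC hS) hn'
    rw [Set.ncard_insert_of_notMem hvS, mul_add_one] at hind
    omega

end Potential

section Grid

variable {d : ℕ} {a : Fin d → ℕ}

lemma ncard_setOf_apply_eq (j : Fin d) (c : Fin (a j)) :
    {u : (i : Fin d) → Fin (a i) | u j = c}.ncard = ∏ i ∈ Finset.univ.erase j, a i := by
  rw [Set.ncard_eq_toFinset_card', Set.toFinset_ofPred, ← Fintype.piFinset_univ]
  convert Fintype.card_filter_piFinset_eq_of_mem (fun i => (Finset.univ : Finset (Fin (a i)))) j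
    (Finset.mem_univ c) using 1
  simp

lemma ncard_setOf_succ_lt_add_prod_erase (j : Fin d) (hj : 0 < a j) :
    {u : (i : Fin d) → Fin (a i) | (u j : ℕ) + 1 < a j}.ncard
      + ∏ i ∈ Finset.univ.erase j, a i = ∏ i, a i := by
  have htop : {u : (i : Fin d) → Fin (a i) | (u j : ℕ) + 1 < a j}ᶜ
      = {u | u j = ⟨a j - 1, by omega⟩} := by
    ext u
    have := (u j).isLt
    simp only [Set.mem_compl_iff, Set.mem_ofPred_eq, not_lt, Fin.ext_iff]
    omega
  rw [← ncard_setOf_apply_eq j ⟨a j - 1, by omega⟩, ← htop, Set.ncard_add_ncard_compl,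
    Nat.card_pi]
  simp

variable (a) in
def upPairs (j : Fin d) : Set (((i : Fin d) → Fin (a i)) × ((i : Fin d) → Fin (a i))) :=
  {p | (p.1 j : ℕ) + 1 = p.2 j ∧ ∀ i ≠ j, p.1 i = p.2 i}

lemma ncard_upPairs_le (j : Fin d) :
    (upPairs a j).ncard ≤ {u : (i : Fin d) → Fin (a i) | (u j : ℕ) + 1 < a j}.ncard := by
  refine Set.ncard_le_ncard_of_injOn Prod.fst (fun p hp => ?_) ?_
  · have := (p.2 j).isLt
    have := hp.1
    simp only [Set.mem_ofPred_eq]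
    omega
  · rintro ⟨u, v⟩ hp ⟨u', v'⟩ hq (rfl : u = u')
    refine Prod.ext rfl (funext fun i => ?_)
    rcases eq_or_ne i j with rfl | hi
    · have := hp.1
      have := hq.1
      exact Fin.ext (by simp_all)
    · exact (hp.2 i hi).symm.trans (hq.2 i hi)

lemma edgeSet_gridD_subset :
    (gridD d a).edgeSet ⊆ ⋃ j, Function.uncurry Sym2.mk '' upPairs a j := by
  intro e he
  induction e using Sym2.ind with
  | h u v =>
    obtain ⟨j, huv | hvu, hrest⟩ := he
    · exact Set.mem_iUnion.2 ⟨j, (u, v), ⟨huv, hrest⟩, rfl⟩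
    · exact Set.mem_iUnion.2 ⟨j, (v, u), ⟨hvu, fun i hi => (hrest i hi).symm⟩, Sym2.eq_swap⟩

lemma ncard_edgeSet_gridD_add_sum_le (ha : ∀ i, 0 < a i) :
    (gridD d a).edgeSet.ncard + ∑ j, ∏ i ∈ Finset.univ.erase j, a i ≤ d * ∏ i, a i :=
  calc _ ≤ ∑ j, (Function.uncurry Sym2.mk '' upPairs a j).ncard
          + ∑ j, ∏ i ∈ Finset.univ.erase j, a i := by
        gcongr
        exact (Set.ncard_le_ncard edgeSet_gridD_subset).trans (Set.ncard_iUnion_le_of_fintype _)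
    _ ≤ ∑ j, ({u : (i : Fin d) → Fin (a i) | (u j : ℕ) + 1 < a j}.ncard
          + ∏ i ∈ Finset.univ.erase j, a i) := by
        rw [← Finset.sum_add_distrib]
        gcongr with j
        exact (Set.ncard_image_le (Set.toFinite _)).trans (ncard_upPairs_le j)
    _ = d * ∏ i, a i := by simp [ncard_setOf_succ_lt_add_prod_erase _ (ha _)]

theorem eIn_add_sum_prod_erase_le_of_percolates (ha : ∀ i, 0 < a i)
    {A₀ : Set ((i : Fin d) → Fin (a i))} (h : Percolates (gridD d a) d A₀) :
    eIn (gridD d a) A₀ + ∑ j, ∏ i ∈ Finset.univ.erase j, a i ≤ d * A₀.ncard := by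
  have hpot := mul_ncard_closure_add_eIn_le (gridD d a) d A₀ subset_rfl (subset_closure _ _ _)
  rw [h, eIn_univ, Set.ncard_univ, Nat.card_pi] at hpot
  simp only [Nat.card_eq_fintype_card, Fintype.card_fin] at hpot
  linarith [ncard_edgeSet_gridD_add_sum_le ha]

end Grid

lemma ceil_div_le_of_le_mul {x d n : ℕ} (h : x ≤ d * n) : ⌈(x : ℚ) / d⌉ ≤ n := by
  rcases d.eq_zero_or_pos with rfl | hd
  · simp
  · rw [Int.ceil_le, div_le_iff₀ (by exact_mod_cast hd)]
    exact_mod_cast (by linarith : x ≤ n * d)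

theorem grid_surface_area_lower_bound_general (d : ℕ) (a : Fin d → ℕ)
    (ha : ∀ i, 1 ≤ a i) (A₀ : Set ((i : Fin d) → Fin (a i)))
    (h : Percolates (gridD d a) d A₀) :
    ⌈(((eIn (gridD d a) A₀ + ∑ j : Fin d, ∏ i ∈ Finset.univ.erase j, a i : ℕ) : ℚ)) / (d : ℚ)⌉
        ≤ (A₀.ncard : ℤ) ∧
    ⌈(((∑ j : Fin d, ∏ i ∈ Finset.univ.erase j, a i : ℕ) : ℚ)) / (d : ℚ)⌉
        ≤ (minPerc (gridD d a) d : ℤ) := by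
  obtain ⟨B, hB, hBcard⟩ := exists_percolates_ncard_eq_minPerc (gridD d a) d
  refine ⟨ceil_div_le_of_le_mul (eIn_add_sum_prod_erase_le_of_percolates ha h), ?_⟩
  rw [← hBcard]
  exact ceil_div_le_of_le_mul
    ((Nat.le_add_left _ _).trans (eIn_add_sum_prod_erase_le_of_percolates ha hB))

/-- **Theorem (Statement 4).** Surface-area lower bound for percolating sets for the
`d`-neighbour process in the grid `[a₁] × ⋯ × [a_d]`, and the resulting bound on `m`. -/
theorem grid_surface_area_lower_bound (d : ℕ) (hd : 1 ≤ d) (a : Fin d → ℕ)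
    (ha : ∀ i, 1 ≤ a i) (A₀ : Set ((i : Fin d) → Fin (a i)))
    (h : Percolates (gridD d a) d A₀) :
    ⌈(((eIn (gridD d a) A₀ + ∑ j : Fin d, ∏ i ∈ Finset.univ.erase j, a i : ℕ) : ℚ)) / (d : ℚ)⌉
        ≤ (A₀.ncard : ℤ) ∧
    ⌈(((∑ j : Fin d, ∏ i ∈ Finset.univ.erase j, a i : ℕ) : ℚ)) / (d : ℚ)⌉
        ≤ (minPerc (gridD d a) d : ℤ) :=
  grid_surface_area_lower_bound_general d a ha A₀ h

end BP
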